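/- arXiv:2111.05398 — 10 statements merged into one kernel-verified Lean document; each statement's English description precedes it below -/
import Mathlib

section
/- For every n ≥ 2, the kernel of W_n* is infinite dimensional. Specifically, the functions f_k(z) = z^{nk} + z^{nk+1} + ... + z^{nk+n-2} − (n−1) z^{nk+n-1}, for k ≥ 0, form an orthogonal family of nonzero vectors in ker(W_n*). -/
open scoped InnerProductSpace
open Filter ContinuousLinearMap

noncomputable section

/-- The Hardy space `H²` identified with `ℓ²(ℕ)` via Maclaurin coefficients. -/
abbrev H2 := lp (fun _ : ℕ => ℂ) 2

/-- `W` is the weighted composition operator `W_n f(z) = (1+z+⋯+z^{n-1}) f(z^n)`,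
expressed in Maclaurin coefficients: `(W_n f)^(nk+j) = f^(k)` for `0 ≤ j ≤ n-1`. -/
def IsWn (n : ℕ) (W : H2 →L[ℂ] H2) : Prop :=
  ∀ (f : H2) (k j : ℕ), j < n → (W f) (n * k + j) = f k

/-- `f_k(z) = z^{nk} + ⋯ + z^{nk+n-2} - (n-1) z^{nk+n-1}` as an element of `ℓ²`. -/
def fvec (n k : ℕ) : H2 :=
  (∑ j ∈ Finset.range (n - 1), lp.single 2 (n * k + j) (1 : ℂ))
    - ((n : ℂ) - 1) • lp.single 2 (n * k + (n - 1)) (1 : ℂ)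

/-! `W_n g` is constant, equal to `ĝ(k)`, on the block of coefficients `nk, …, nk+n-1`. The
coefficients of `f_k` live on that block and sum to zero, so `f_k ⊥ range W_n = (ker W_n*)ᗮ`.
Distinct `f_k` have disjoint supports, hence are orthogonal, and an infinite orthogonal family of
nonzero vectors is linearly independent. -/

theorem Nat.eq_of_mul_add_eq_mul_add {n k l j j' : ℕ} (hj : j < n) (hj' : j' < n)
    (h : n * k + j = n * l + j') : k = l := by
  have hn : 0 < n := by omega
  simpa [Nat.mul_add_div hn, Nat.div_eq_of_lt hj, Nat.div_eq_of_lt hj'] using congrArg (· / n) h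

theorem Submodule.not_finiteDimensional_of_orthogonal_family {𝕜 E ι : Type*} [RCLike 𝕜]
    [NormedAddCommGroup E] [InnerProductSpace 𝕜 E] [Infinite ι] (K : Submodule 𝕜 E)
    (v : ι → E) (hK : ∀ i, v i ∈ K) (h0 : ∀ i, v i ≠ 0)
    (horth : Pairwise fun i j => ⟪v i, v j⟫_𝕜 = 0) : ¬ FiniteDimensional 𝕜 K := fun _ ↦
  Module.Finite.not_linearIndependent_of_infinite (fun i ↦ (⟨v i, hK i⟩ : K))
    (LinearIndependent.of_comp K.subtype (linearIndependent_of_ne_zero_of_inner_eq_zero h0 horth))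

theorem inner_fvec_left (n k : ℕ) (g : H2) :
    ⟪fvec n k, g⟫_ℂ =
      (∑ j ∈ Finset.range (n - 1), g (n * k + j)) - ((n : ℂ) - 1) * g (n * k + (n - 1)) := by
  simp [fvec, lp.inner_single_left, RCLike.inner_apply, mul_comm]

theorem fvec_apply (n k i : ℕ) :
    fvec n k i = (∑ j ∈ Finset.range (n - 1), (lp.single 2 (n * k + j) (1 : ℂ) : H2) i)
      - ((n : ℂ) - 1) * (lp.single 2 (n * k + (n - 1)) (1 : ℂ) : H2) i := by
  simp only [fvec, lp.coeFn_sub, lp.coeFn_smul, Pi.sub_apply, Pi.smul_apply, lp.coeFn_sum,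
    Finset.sum_apply, smul_eq_mul]

theorem fvec_apply_last (n k : ℕ) : fvec n k (n * k + (n - 1)) = -((n : ℂ) - 1) := by
  have hsum : ∀ j ∈ Finset.range (n - 1),
      (lp.single 2 (n * k + j) (1 : ℂ) : H2) (n * k + (n - 1)) = 0 := fun j hj ↦
    lp.single_apply_ne _ _ _ (by have := Finset.mem_range.mp hj; omega)
  rw [fvec_apply, Finset.sum_eq_zero hsum, lp.single_apply_self, mul_one, zero_sub]

theorem fvec_apply_of_ne {n k l j : ℕ} (hj : j < n) (hkl : k ≠ l) :
    fvec n l (n * k + j) = 0 := by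
  have hblock : ∀ j' < n, (lp.single 2 (n * l + j') (1 : ℂ) : H2) (n * k + j) = 0 := fun j' hj' ↦
    lp.single_apply_ne _ _ _ fun h ↦ hkl (Nat.eq_of_mul_add_eq_mul_add hj hj' h)
  have hsum : ∀ j' ∈ Finset.range (n - 1),
      (lp.single 2 (n * l + j') (1 : ℂ) : H2) (n * k + j) = 0 := fun j' hj' ↦
    hblock j' (by have := Finset.mem_range.mp hj'; omega)
  rw [fvec_apply, Finset.sum_eq_zero hsum, hblock (n - 1) (by omega), mul_zero, sub_zero]

theorem fvec_ne_zero {n : ℕ} (hn : n ≠ 1) (k : ℕ) : fvec n k ≠ 0 := by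
  intro h
  have hcoeff := fvec_apply_last n k
  rw [h, lp.coeFn_zero, Pi.zero_apply, eq_comm, neg_eq_zero, sub_eq_zero] at hcoeff
  exact hn (Nat.cast_eq_one.mp hcoeff)

theorem inner_fvec_of_ne {n k l : ℕ} (hn : 0 < n) (hkl : k ≠ l) :
    ⟪fvec n k, fvec n l⟫_ℂ = 0 := by
  rw [inner_fvec_left, Finset.sum_eq_zero, fvec_apply_of_ne (by omega) hkl, mul_zero, sub_zero]
  intro j hj
  exact fvec_apply_of_ne (by have := Finset.mem_range.mp hj; omega) hkl

theorem inner_fvec_apply_eq_zero {n : ℕ} (hn : 0 < n) {W : H2 →L[ℂ] H2} (hW : IsWn n W)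
    (k : ℕ) (g : H2) : ⟪fvec n k, W g⟫_ℂ = 0 := by
  have hblock : ∀ j ∈ Finset.range (n - 1), W g (n * k + j) = g k := fun j hj ↦
    hW g k j (by have := Finset.mem_range.mp hj; omega)
  rw [inner_fvec_left, Finset.sum_congr rfl hblock, hW g k (n - 1) (by omega),
    Finset.sum_const, Finset.card_range, nsmul_eq_mul, Nat.cast_pred hn, sub_self]

theorem fvec_mem_ker_adjoint {n : ℕ} (hn : 0 < n) {W : H2 →L[ℂ] H2} (hW : IsWn n W) (k : ℕ) :
    fvec n k ∈ LinearMap.ker (ContinuousLinearMap.adjoint W : H2 →ₗ[ℂ] H2) := by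
  rw [← W.orthogonal_range, Submodule.mem_orthogonal']
  rintro _ ⟨g, rfl⟩
  exact inner_fvec_apply_eq_zero hn hW k g

/-- For `n ≥ 2` the kernel of `W_n*` is infinite dimensional; specifically the `f_k`
form an orthogonal family of nonzero vectors in `ker W_n*`. -/
theorem ker_adjoint_infinite (n : ℕ) (hn : 2 ≤ n) (W : H2 →L[ℂ] H2) (hW : IsWn n W) :
    ¬ FiniteDimensional ℂ (LinearMap.ker (ContinuousLinearMap.adjoint W : H2 →ₗ[ℂ] H2)) ∧
    (∀ k : ℕ, fvec n k ∈ LinearMap.ker (ContinuousLinearMap.adjoint W : H2 →ₗ[ℂ] H2)) ∧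
    (∀ k : ℕ, fvec n k ≠ 0) ∧
    (∀ k l : ℕ, k ≠ l → ⟪fvec n k, fvec n l⟫_ℂ = 0) := by
  have hn0 : 0 < n := by omega
  have hmem := fvec_mem_ker_adjoint hn0 hW
  have hne := fvec_ne_zero (n := n) (by omega)
  have horth : ∀ k l : ℕ, k ≠ l → ⟪fvec n k, fvec n l⟫_ℂ = 0 := fun _ _ ↦ inner_fvec_of_ne hn0
  exact ⟨Submodule.not_finiteDimensional_of_orthogonal_family _ _ hmem hne horth, hmem, hne, horth⟩
end
end

section
/- For every n ≥ 2, the operator W_n* on H² is universal in the sense of Rota: it is surjective and has infinite-dimensional kernel (hence satisfies the Caradus criterion). -/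
open scoped InnerProductSpace
open Filter ContinuousLinearMap

noncomputable section

/-! W_n is √n times an isometry, because each coefficient of `f` is repeated `n` times in `W_n f`;
hence `W_n* W_n = n` and `W_n*` is onto. The kernel of `W_n*` is the orthogonal complement of the
range of `W_n`, which contains the vectors `e_{nk} - e_{nk+1}`; these are linearly independent,
as evaluation at `n i` picks out the `i`-th of them. -/

theorem tsum_eq_nsmul_tsum_of_apply_mul_add {R : Type*} [AddCommGroup R] [UniformSpace R]
    [IsUniformAddGroup R] [CompleteSpace R] [T0Space R] {n : ℕ} [NeZero n] {F G : ℕ → R}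
    (hF : Summable F) (h : ∀ k j, j < n → F (n * k + j) = G k) :
    ∑' i, F i = n • ∑' k, G k := by
  rw [Nat.sumByResidueClasses hF n]
  simp_rw [add_comm (ZMod.val _), h _ _ (ZMod.val_lt _)]
  simp [ZMod.card]

theorem linearIndependent_of_dual_apply_eq_ite {R M ι : Type*} [Semiring R] [AddCommMonoid M]
    [Module R M] [DecidableEq ι] (φ : ι → M →ₗ[R] R) {v : ι → M}
    (h : ∀ i j, φ i (v j) = if i = j then 1 else 0) : LinearIndependent R v := by
  have hv : LinearMap.pi φ ∘ v = fun j => Pi.single j 1 := by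
    ext j i
    simp [h, Pi.single_apply]
  exact .of_comp (LinearMap.pi φ) (hv ▸ Pi.linearIndependent_single_one ι R)

theorem Submodule.not_finiteDimensional_of_linearIndependent {K V ι : Type*} [DivisionRing K]
    [AddCommGroup V] [Module K V] [Infinite ι] {S : Submodule K V} {v : ι → V}
    (hv : LinearIndependent K v) (hS : ∀ i, v i ∈ S) : ¬ FiniteDimensional K S := fun _ =>
  Module.Finite.not_linearIndependent_of_infinite (fun i => (⟨v i, hS i⟩ : S))
    (hv.of_comp S.subtype)

section Adjoint

variable {𝕜 E F : Type*} [RCLike 𝕜] [NormedAddCommGroup E] [InnerProductSpace 𝕜 E]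
  [CompleteSpace E] [NormedAddCommGroup F] [InnerProductSpace 𝕜 F] [CompleteSpace F]
  {T : E →L[𝕜] F} {c : 𝕜}

theorem ContinuousLinearMap.adjoint_apply_apply_of_inner_map_map
    (hT : ∀ x y, ⟪T x, T y⟫_𝕜 = c * ⟪x, y⟫_𝕜) (y : E) : adjoint T (T y) = c • y :=
  ext_inner_left 𝕜 fun x => by rw [adjoint_inner_right, inner_smul_right, hT]

theorem ContinuousLinearMap.surjective_adjoint_of_inner_map_map (hc : c ≠ 0)
    (hT : ∀ x y, ⟪T x, T y⟫_𝕜 = c * ⟪x, y⟫_𝕜) : Function.Surjective (adjoint T) := fun y =>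
  ⟨c⁻¹ • T y, by
    rw [map_smul, adjoint_apply_apply_of_inner_map_map hT, smul_smul, inv_mul_cancel₀ hc,
      one_smul]⟩

end Adjoint

theorem lp.single_mul_sub_single_apply_mul {n : ℕ} (hn : 1 < n) (i k : ℕ) :
    (lp.single 2 (n * k) 1 - lp.single 2 (n * k + 1) 1 : H2) (n * i) = if i = k then 1 else 0 := by
  have hne : n * i ≠ n * k + 1 := fun h => by
    have := congrArg (· % n) h
    simp [Nat.add_mod, Nat.mod_eq_of_lt hn] at this
  rw [lp.coeFn_sub, Pi.sub_apply, lp.single_apply_ne 2 _ _ hne, sub_zero, lp.single_apply,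
    Pi.single_apply]
  simp [show n ≠ 0 by omega]

namespace IsWn

variable {n : ℕ} {W : H2 →L[ℂ] H2}

theorem inner_map_map [NeZero n] (hW : IsWn n W) (f g : H2) :
    ⟪W f, W g⟫_ℂ = n * ⟪f, g⟫_ℂ := by
  rw [lp.inner_eq_tsum, lp.inner_eq_tsum, ← nsmul_eq_mul]
  exact tsum_eq_nsmul_tsum_of_apply_mul_add (lp.summable_inner _ _) fun k j hj => by
    rw [hW f k j hj, hW g k j hj]

theorem adjoint_single_sub_single (hW : IsWn n W) (hn : 1 < n) (k : ℕ) :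
    adjoint W (lp.single 2 (n * k) 1 - lp.single 2 (n * k + 1) 1) = 0 :=
  ext_inner_right ℂ fun f => by
    rw [adjoint_inner_left, inner_zero_left, inner_sub_left, lp.inner_single_left,
      lp.inner_single_left, ← add_zero (n * k), hW f k 0 (by omega), add_zero,
      hW f k 1 hn, sub_self]

end IsWn

/-- For every `n ≥ 2`, `W_n*` is surjective with infinite-dimensional kernel, hence
universal for `H²` in the sense of Rota by the Caradus criterion. -/
theorem adjoint_universal (n : ℕ) (hn : 2 ≤ n) (W : H2 →L[ℂ] H2) (hW : IsWn n W) :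
    Function.Surjective (ContinuousLinearMap.adjoint W) ∧
      ¬ FiniteDimensional ℂ (LinearMap.ker (ContinuousLinearMap.adjoint W : H2 →ₗ[ℂ] H2)) := by
  have : NeZero n := ⟨by omega⟩
  refine ⟨surjective_adjoint_of_inner_map_map (by exact_mod_cast NeZero.ne n) hW.inner_map_map,
    Submodule.not_finiteDimensional_of_linearIndependent (ι := ℕ) ?_
      fun k => hW.adjoint_single_sub_single hn k⟩
  exact linearIndependent_of_dual_apply_eq_ite (fun i => lp.evalₗ _ 2 (n * i))
    fun i k => lp.single_mul_sub_single_apply_mul hn i k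
end
end

section
/- For every k ≥ 1, the intersection of the kernels of W_n* over all n ≥ k+1 equals span{1−z, 1−z², ..., 1−z^k}. -/
/-!
The coefficients of `W_n* f` are the block sums `∑_{j<n} f(nm+j)`. Taking `m = 0` for every
`n ≥ k+1` makes the partial sums of `f` vanish from `k+1` on, so `f` is supported on `[0, k]` and
has total sum zero; conversely, for such `f` every block with `m ≥ 1` lies beyond `k`. These are
exactly the combinations of the `e_0 - e_j`, `1 ≤ j ≤ k`.
-/

open scoped InnerProductSpace
open Filter ContinuousLinearMap

noncomputable section

open Finset

namespace IsWn

variable {n : ℕ} {W : H2 →L[ℂ] H2}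

theorem apply_single (hn : 0 < n) (hW : IsWn n W) (m : ℕ) :
    W (lp.single 2 m 1) = ∑ j ∈ range n, lp.single 2 (n * m + j) 1 := by
  ext i
  rw [lp.coeFn_sum, Finset.sum_apply, ← Nat.div_add_mod i n, hW _ _ _ (Nat.mod_lt i hn)]
  have hr := Nat.mod_lt i hn
  generalize i / n = q
  generalize i % n = r at hr ⊢
  rw [sum_eq_single_of_mem r (mem_range.2 hr)]
  · simp [Pi.single_apply, hn.ne']
  · intro j hj hjr
    refine Pi.single_eq_of_ne (fun h => hjr (Eq.symm ?_)) _
    simpa [Nat.mod_eq_of_lt hr, Nat.mod_eq_of_lt (mem_range.1 hj)] using congrArg (· % n) h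

theorem adjoint_apply (hn : 0 < n) (hW : IsWn n W) (f : H2) (m : ℕ) :
    adjoint W f m = ∑ j ∈ range n, f (n * m + j) := by
  have := lp.inner_single_left (𝕜 := ℂ) (G := fun _ : ℕ => ℂ) m 1 (adjoint W f)
  rw [adjoint_inner_right, hW.apply_single hn, sum_inner] at this
  simpa [lp.inner_single_left] using this.symm

theorem mem_ker_adjoint_iff (hn : 0 < n) (hW : IsWn n W) (f : H2) :
    f ∈ LinearMap.ker (adjoint W : H2 →ₗ[ℂ] H2) ↔ ∀ m, ∑ j ∈ range n, f (n * m + j) = 0 := by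
  simp only [LinearMap.mem_ker, coe_coe, lp.ext_iff, funext_iff, hW.adjoint_apply hn]
  rfl

end IsWn

theorem forall_sum_block_eq_zero_iff {M : Type*} [AddCommGroup M] (k : ℕ) (f : ℕ → M) :
    (∀ n, k + 1 ≤ n → ∀ m, ∑ j ∈ range n, f (n * m + j) = 0) ↔
      (∀ i, k < i → f i = 0) ∧ ∑ i ∈ range (k + 1), f i = 0 := by
  constructor
  · intro h
    have hpartial : ∀ n, k + 1 ≤ n → ∑ i ∈ range n, f i = 0 := fun n hn => by
      simpa using h n hn 0
    refine ⟨fun i hi => ?_, hpartial _ le_rfl⟩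
    have := hpartial (i + 1) (by omega)
    rwa [sum_range_succ, hpartial i hi, zero_add] at this
  · rintro ⟨htail, hsum⟩ n hn m
    rcases Nat.eq_zero_or_pos m with rfl | hm
    · simp only [mul_zero, zero_add]
      rw [← sum_range_add_sum_Ico _ hn, hsum, zero_add]
      exact sum_eq_zero fun i hi => htail i (mem_Ico.1 hi).1
    · exact sum_eq_zero fun j _ => htail _ (by nlinarith)

open scoped ENNReal in
theorem lp.mem_span_single_zero_sub_single_iff {𝕜 : Type*} [NormedField 𝕜] {p : ℝ≥0∞}
    [Fact (1 ≤ p)] (k : ℕ) (f : lp (fun _ : ℕ => 𝕜) p) :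
    f ∈ Submodule.span 𝕜 ((fun j => lp.single p 0 1 - lp.single p j 1) '' Set.Icc 1 k) ↔
      (∀ i, k < i → f i = 0) ∧ ∑ i ∈ range (k + 1), f i = 0 := by
  constructor
  · intro hf
    induction hf using Submodule.span_induction with
    | mem x hx =>
      obtain ⟨j, ⟨hj1, hjk⟩, rfl⟩ := hx
      refine ⟨fun i hi => ?_, ?_⟩
      · simp [show i ≠ 0 by omega, show i ≠ j by omega]
      · simp [sum_sub_distrib, Pi.single_apply, hjk]
    | zero => simp
    | add x y _ _ hx hy =>
      refine ⟨fun i hi => by simp [hx.1 i hi, hy.1 i hi], ?_⟩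
      simp only [lp.coeFn_add, Pi.add_apply, sum_add_distrib, hx.2, hy.2, add_zero]
    | smul a x _ hx => exact ⟨fun i hi => by simp [hx.1 i hi], by simp [← mul_sum, hx.2]⟩
  · rintro ⟨htail, hsum⟩
    have hf : f = ∑ j ∈ Icc 1 k, (-f j) • (lp.single p 0 1 - lp.single p j 1) := by
      have hf0 : f 0 = -∑ j ∈ Icc 1 k, f j := by
        rw [range_eq_Ico, sum_eq_sum_Ico_succ_bot (Nat.succ_pos k)] at hsum
        exact eq_neg_of_add_eq_zero_left hsum
      ext i
      simp only [lp.coeFn_sum, Finset.sum_apply, lp.coeFn_smul, lp.coeFn_sub, Pi.smul_apply,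
        Pi.sub_apply, lp.single_apply, Pi.single_apply, smul_eq_mul, mul_sub, mul_ite, mul_one,
        mul_zero, sum_sub_distrib, sum_ite_eq]
      rcases eq_or_ne i 0 with rfl | hi0
      · simp [hf0]
      · by_cases hik : i ≤ k
        · simp [hi0, hik, Nat.one_le_iff_ne_zero.2 hi0]
        · simp [hi0, hik, htail i (by omega)]
    rw [hf]
    exact Submodule.sum_mem _ fun j hj =>
      Submodule.smul_mem _ _ (Submodule.subset_span ⟨j, by simpa using hj, rfl⟩)

theorem iInf_ker_adjoint_general (k : ℕ) (W : ℕ → (H2 →L[ℂ] H2))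
    (hW : ∀ n, 1 ≤ n → IsWn n (W n)) :
    (⨅ n : ℕ, ⨅ _ : k + 1 ≤ n, LinearMap.ker (ContinuousLinearMap.adjoint (W n) : H2 →ₗ[ℂ] H2)) =
      Submodule.span ℂ
        ((fun j => lp.single (E := fun _ : ℕ => ℂ) 2 0 (1 : ℂ) - lp.single (E := fun _ : ℕ => ℂ) 2 j (1 : ℂ)) '' (Set.Icc 1 k)) := by
  ext f
  rw [lp.mem_span_single_zero_sub_single_iff, ← forall_sum_block_eq_zero_iff]
  simp only [Submodule.mem_iInf]
  exact forall₂_congr fun n hn => (hW n (by omega)).mem_ker_adjoint_iff (by omega) f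

/-- For every `k ≥ 1`, `⋂_{n ≥ k+1} ker W_n* = span{1-z, …, 1-z^k}`, where `1 - z^j`
corresponds to the sequence `e_0 - e_j` in `ℓ²`. -/
theorem iInf_ker_adjoint (k : ℕ) (hk : 1 ≤ k) (W : ℕ → (H2 →L[ℂ] H2))
    (hW : ∀ n, 1 ≤ n → IsWn n (W n)) :
    (⨅ n : ℕ, ⨅ _ : k + 1 ≤ n, LinearMap.ker (ContinuousLinearMap.adjoint (W n) : H2 →ₗ[ℂ] H2)) =
      Submodule.span ℂ
        ((fun j => lp.single (E := fun _ : ℕ => ℂ) 2 0 (1 : ℂ) - lp.single (E := fun _ : ℕ => ℂ) 2 j (1 : ℂ)) '' (Set.Icc 1 k)) :=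
  iInf_ker_adjoint_general k W hW
end
end

section
/- The intersection over k ≥ 2 of the closed spans ⋁_{n≥k} Im(W_n) is the zero subspace of H². -/
open scoped InnerProductSpace
open Filter ContinuousLinearMap

noncomputable section

/-!
Every function in the range of `W_n` has its first `n` coefficients equal to `f̂(0)`. Hence every
function in the closed span of the ranges of `W_n`, `n ≥ k`, has its first `k` coefficients equal,
since `g ↦ ĝ(j) - ĝ(0)` is continuous. A function in the intersection over all `k` therefore has
constant coefficients, and a constant square-summable sequence vanishes.
-/

open scoped ENNReal

theorem Memℓp.eq_zero_of_const {α E : Type*} [Infinite α] [NormedAddCommGroup E] {p : ℝ≥0∞}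
    (hp : p ≠ ∞) {a : E} (h : Memℓp (fun _ : α => a) p) : a = 0 := by
  rcases eq_or_ne p 0 with rfl | hp₀
  · by_contra ha
    simpa [ha, Set.infinite_univ.not_finite] using memℓp_zero_iff.1 h
  · have hpos : 0 < p.toReal := ENNReal.toReal_pos hp₀ hp
    have hnorm : ‖a‖ ^ p.toReal = 0 := (summable_const_iff _).1 (h.summable hpos)
    exact norm_eq_zero.1 ((Real.rpow_eq_zero (norm_nonneg a) hpos.ne').1 hnorm)

theorem IsWn.apply_eq_apply_zero {n : ℕ} {W : H2 →L[ℂ] H2} (hW : IsWn n W) (f : H2) {j : ℕ}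
    (hj : j < n) : W f j = W f 0 := by
  simpa using (hW f 0 j hj).trans (hW f 0 0 (by omega)).symm

theorem apply_eq_apply_zero_of_mem_closure_iSup_range {W : ℕ → H2 →L[ℂ] H2} {k j : ℕ}
    (hW : ∀ n, k ≤ n → IsWn n (W n)) (hj : j < k) {g : H2}
    (hg : g ∈ (⨆ n : ℕ, ⨆ _ : k ≤ n, LinearMap.range (W n : H2 →ₗ[ℂ] H2)).topologicalClosure) :
    g j = g 0 := by
  let δ : H2 →L[ℂ] ℂ := lp.evalCLM ℂ (fun _ : ℕ => ℂ) 2 j - lp.evalCLM ℂ (fun _ : ℕ => ℂ) 2 0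
  have hle : (⨆ n : ℕ, ⨆ _ : k ≤ n, LinearMap.range (W n : H2 →ₗ[ℂ] H2)).topologicalClosure ≤
      LinearMap.ker (δ : H2 →ₗ[ℂ] ℂ) := by
    refine Submodule.topologicalClosure_minimal _ ?_ δ.isClosed_ker
    refine iSup₂_le fun n hn => ?_
    rintro _ ⟨f, rfl⟩
    exact sub_eq_zero.2 ((hW n hn).apply_eq_apply_zero f (hj.trans_le hn))
  exact sub_eq_zero.1 (hle hg)

/-- The intersection over `k ≥ 2` of the closed spans `⋁_{n ≥ k} Im W_n` is zero. -/
theorem iInf_closed_span_ranges (W : ℕ → (H2 →L[ℂ] H2))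
    (hW : ∀ n, 1 ≤ n → IsWn n (W n)) :
    (⨅ k : ℕ, ⨅ _ : 2 ≤ k,
        (⨆ n : ℕ, ⨆ _ : k ≤ n, LinearMap.range (W n : H2 →ₗ[ℂ] H2)).topologicalClosure) = ⊥ := by
  refine (Submodule.eq_bot_iff _).2 fun g hg => ?_
  simp only [Submodule.mem_iInf] at hg
  have hconst : ∀ j, g j = g 0 := fun j =>
    apply_eq_apply_zero_of_mem_closure_iSup_range (k := j + 2) (fun n hn => hW n (by omega))
      (by omega) (hg (j + 2) (by omega))
  have hg₀ : g 0 = 0 := by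
    have hmem : Memℓp (fun _ : ℕ => g 0) 2 := (congrArg (Memℓp · 2) (funext hconst)).mp g.2
    exact hmem.eq_zero_of_const ENNReal.ofNat_ne_top
  ext j
  rw [hconst j, hg₀]
  rfl
end
end

section
/- For every n ≥ 2, the operator W_n on H² has no eigenvalues: there is no nonzero f ∈ H² and λ ∈ ℂ with W_n f = λ f. -/
open scoped InnerProductSpace
open Filter ContinuousLinearMap

noncomputable section

/-- For `n ≥ 2`, the operator `W_n` has no eigenvalues. -/
theorem Wn_no_eigenvalues (n : ℕ) (hn : 2 ≤ n) (W : H2 →L[ℂ] H2) (hW : IsWn n W)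
    (f : H2) (hf : f ≠ 0) (lam : ℂ) : W f ≠ lam • f := by
  intro h
  have key : ∀ k j, j < n → f k = lam * f (n * k + j) := by
    intro k j hj
    have h1 := hW f k j hj
    rw [h] at h1
    simpa [lp.coeFn_smul] using h1.symm
  have hrel : ∀ m : ℕ, f (m / n) = lam * f m := by
    intro m
    have h1 := key (m / n) (m % n) (Nat.mod_lt _ (by omega))
    rwa [Nat.div_add_mod] at h1
  rcases eq_or_ne lam 0 with h0 | h0
  · apply hf
    ext k
    have h1 := key k 0 (by omega)
    simp [h0] at h1
    simpa using h1
  rcases eq_or_ne lam 1 with h1 | h1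
  · -- f is constant, hence f 0 = 0 by summability, hence f = 0
    have hconst : ∀ m, f m = f 0 := by
      intro m
      induction m using Nat.strong_induction_on with
      | _ m ih =>
        rcases Nat.eq_zero_or_pos m with rfl | hm
        · rfl
        · have h2 := hrel m
          rw [h1, one_mul] at h2
          rw [← h2]
          exact ih (m / n) (Nat.div_lt_self hm (by omega))
    have hmem : Memℓp (fun i : ℕ => f i) 2 := lp.memℓp f
    have hs : Summable fun m : ℕ => ‖f m‖ ^ (2 : ℝ).toNNReal.toReal := by
      have := hmem.summable (p := 2) (by norm_num)
      simpa using this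
    have hten : Tendsto (fun m : ℕ => ‖f m‖ ^ ((2 : ℝ).toNNReal.toReal)) atTop (nhds 0) :=
      hs.tendsto_atTop_zero
    have hconst' : (fun m : ℕ => ‖f m‖ ^ ((2 : ℝ).toNNReal.toReal))
        = fun _ : ℕ => ‖f 0‖ ^ ((2 : ℝ).toNNReal.toReal) := by
      funext m; rw [hconst m]
    rw [hconst'] at hten
    have hz : ‖f 0‖ ^ ((2 : ℝ).toNNReal.toReal) = 0 :=
      (tendsto_nhds_unique tendsto_const_nhds hten)
    have hf0 : f 0 = 0 := by
      have hn0 : ‖f 0‖ = 0 := by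
        by_contra hne
        have hpos : 0 < ‖f 0‖ := lt_of_le_of_ne (norm_nonneg _) (Ne.symm hne)
        have hgt : (0 : ℝ) < ‖f 0‖ ^ ((2 : ℝ).toNNReal.toReal) :=
          Real.rpow_pos_of_pos hpos _
        rw [hz] at hgt
        exact lt_irrefl _ hgt
      exact norm_eq_zero.mp hn0
    apply hf
    ext m
    simpa [hf0] using hconst m
  · -- lam ≠ 0, 1 : f = 0 by strong induction
    have hzero : ∀ m, f m = 0 := by
      intro m
      induction m using Nat.strong_induction_on with
      | _ m ih =>
        rcases Nat.eq_zero_or_pos m with rfl | hm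
        · have h2 := hrel 0
          rw [Nat.zero_div] at h2
          have h3 : (1 - lam) * f 0 = 0 := by ring_nf; linear_combination h2
          rcases mul_eq_zero.mp h3 with h4 | h4
          · exact absurd (by linear_combination -h4) h1
          · exact h4
        · have h2 := hrel m
          rw [ih (m / n) (Nat.div_lt_self hm (by omega))] at h2
          exact (mul_eq_zero.mp h2.symm).resolve_left h0
    apply hf
    ext m
    simpa using hzero m
end
end

section
/- For every n ≥ 2, W_n has no nontrivial finite-dimensional invariant subspace: if E ⊆ H² is a finite-dimensional subspace with W_n E ⊆ E, then E = {0}. -/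
open scoped InnerProductSpace
open Filter ContinuousLinearMap

noncomputable section

/-- No eigenvectors: if `μ * f (n*k+j) = f k` for all `k` and `j < n`, then `f = 0`. -/
lemma no_eigen (n : ℕ) (hn : 2 ≤ n) (f : H2) (μ : ℂ)
    (h : ∀ k j : ℕ, j < n → μ * f (n * k + j) = f k) : f = 0 := by
  have hzero : ∀ m : ℕ, f m = 0 := by
    rcases eq_or_ne μ 0 with h0 | h0
    · intro m
      have := h m 0 (by omega)
      simp [h0] at this
      exact this.symm
    rcases eq_or_ne μ 1 with h1 | h1
    · -- all values equal f 0, then summability forces f 0 = 0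
      have hconst : ∀ m : ℕ, f m = f 0 := by
        intro m
        induction m using Nat.strong_induction_on with
        | _ m ih =>
          rcases Nat.eq_zero_or_pos m with rfl | hm
          · rfl
          · have hk : m / n < m := Nat.div_lt_self hm (by omega)
            have heq : μ * f (n * (m / n) + m % n) = f (m / n) :=
              h (m / n) (m % n) (Nat.mod_lt _ (by omega))
            rw [Nat.div_add_mod] at heq
            rw [h1, one_mul] at heq
            rw [heq, ih _ hk]
      have hsum : Summable fun m : ℕ => ‖f m‖ ^ (2 : ℝ) := by
        have := lp.memℓp f
        exact this.summable (by norm_num)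
      have htend : Tendsto (fun m : ℕ => ‖f m‖ ^ (2 : ℝ)) atTop (nhds 0) :=
        hsum.tendsto_atTop_zero
      have : (fun m : ℕ => ‖f m‖ ^ (2 : ℝ)) = fun _ => ‖f 0‖ ^ (2 : ℝ) := by
        funext m; rw [hconst m]
      rw [this] at htend
      have h00 : ‖f 0‖ ^ (2 : ℝ) = 0 := tendsto_const_nhds_iff.mp htend
      rw [show (2 : ℝ) = ((2 : ℕ) : ℝ) by norm_num, Real.rpow_natCast] at h00
      have hf0 : f 0 = 0 :=
        norm_eq_zero.mp (pow_eq_zero_iff (by norm_num : (2:ℕ) ≠ 0) |>.mp h00)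
      intro m; rw [hconst m, hf0]
    · -- μ ≠ 0, 1 : f 0 = 0 and strong induction
      have hf0 : f 0 = 0 := by
        have := h 0 0 (by omega)
        simp at this
        rcases mul_eq_zero.mp (by linear_combination this - f 0 : (μ - 1) * f 0 = 0) with hc | hc
        · exact absurd (by linear_combination hc) h1
        · exact hc
      intro m
      induction m using Nat.strong_induction_on with
      | _ m ih =>
        rcases Nat.eq_zero_or_pos m with rfl | hm
        · exact hf0
        · have hk : m / n < m := Nat.div_lt_self hm (by omega)
          have heq : μ * f (n * (m / n) + m % n) = f (m / n) :=
            h (m / n) (m % n) (Nat.mod_lt _ (by omega))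
          rw [Nat.div_add_mod] at heq
          rw [ih _ hk] at heq
          exact (mul_eq_zero.mp heq).resolve_left h0
  ext m
  simpa using hzero m

/-- For `n ≥ 2`, `W_n` has no nontrivial finite-dimensional invariant subspace. -/
theorem Wn_no_finiteDim_invariant (n : ℕ) (hn : 2 ≤ n) (W : H2 →L[ℂ] H2) (hW : IsWn n W)
    (E : Submodule ℂ H2) (hE : FiniteDimensional ℂ E) (hinv : ∀ x ∈ E, W x ∈ E) :
    E = ⊥ := by
  by_contra hbot
  have : Nontrivial E := Submodule.nontrivial_iff_ne_bot.mpr hbot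
  set T : E →ₗ[ℂ] E := (W : H2 →ₗ[ℂ] H2).restrict hinv with hT
  obtain ⟨μ, hμ⟩ := Module.End.exists_eigenvalue T
  obtain ⟨x, hx⟩ := hμ.exists_hasEigenvector
  have hx0 : x ≠ 0 := hx.right
  have hWx : W (x : H2) = μ • (x : H2) := by
    have := congrArg (Subtype.val) hx.apply_eq_smul
    simpa [hT, LinearMap.restrict_apply] using this
  have hrel : ∀ k j : ℕ, j < n → μ * (x : H2) (n * k + j) = (x : H2) k := by
    intro k j hj
    have h1 := hW (x : H2) k j hj
    rw [hWx] at h1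
    simpa using h1
  have : (x : H2) = 0 := no_eigen n hn _ μ hrel
  exact hx0 (Subtype.ext this)
end
end

section
/- Let m ≥ 1 and λ ∈ ℂ with |λ+1| > √(m+1). Then the polynomial p(z) = z^m + z^{m−1} + ... + z − λ is a cyclic vector for the semigroup (W_n): the closed linear span of {W_n p : n ≥ 1} equals H². -/
open scoped InnerProductSpace
open Filter ContinuousLinearMap

noncomputable section

/-!
If `g ⊥ W_n p` for all `n ≥ 1`, let `G n = ⟪1 + z + ⋯ + z^(n-1), g⟫` be the partial sums of the
coefficients of `g`. Since `p = (1 + z + ⋯ + z^m) - (λ + 1)` and `W_n` sends `1 + ⋯ + z^(k-1)` to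
`1 + ⋯ + z^(nk-1)`, orthogonality reads `G ((m+1) n) = conj (λ+1) • G n`. Iterating and using
Cauchy–Schwarz, `|λ+1|^k |G n| = |G ((m+1)^k n)| ≤ √((m+1)^k n) ‖g‖`, so `|λ+1| > √(m+1)` forces
`G = 0`, i.e. `g = 0`.
-/

open scoped ComplexConjugate Topology

def rangeIndicator (n : ℕ) : H2 := ∑ i ∈ Finset.range n, lp.single 2 i 1

lemma rangeIndicator_apply (n i : ℕ) : rangeIndicator n i = if i < n then 1 else 0 := by
  simp only [rangeIndicator, lp.coeFn_sum, Finset.sum_apply, lp.coeFn_single,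
    Finset.sum_pi_single]
  simp

lemma norm_rangeIndicator (n : ℕ) : ‖rangeIndicator n‖ = √n := by
  have h := lp.norm_sum_single (p := 2) (E := fun _ : ℕ => ℂ) (by norm_num)
    (fun _ => (1 : ℂ)) (Finset.range n)
  norm_num at h
  rw [rangeIndicator, ← Real.sqrt_sq (norm_nonneg _), h]

lemma inner_rangeIndicator_left (n : ℕ) (g : H2) :
    ⟪rangeIndicator n, g⟫_ℂ = ∑ i ∈ Finset.range n, g i := by
  simp [rangeIndicator, lp.inner_single_left]

lemma eq_zero_of_inner_rangeIndicator_eq_zero {g : H2}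
    (h : ∀ n, ⟪rangeIndicator n, g⟫_ℂ = 0) : g = 0 := by
  ext i
  have := h (i + 1)
  rwa [inner_rangeIndicator_left, Finset.sum_range_succ, ← inner_rangeIndicator_left, h,
    zero_add] at this

lemma sum_single_Icc_sub_smul_single (m : ℕ) (lam : ℂ) :
    (∑ j ∈ Finset.Icc 1 m, lp.single 2 j (1 : ℂ)) - lam • lp.single 2 0 (1 : ℂ) =
      rangeIndicator (m + 1) - (lam + 1) • rangeIndicator 1 := by
  ext i
  simp only [lp.coeFn_sub, lp.coeFn_smul, lp.coeFn_sum, Pi.sub_apply, Pi.smul_apply,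
    rangeIndicator_apply, Finset.sum_apply, lp.coeFn_single, smul_eq_mul, Pi.single_apply,
    Finset.sum_ite_eq, Finset.mem_Icc]
  split_ifs <;> first | omega | ring

lemma IsWn.apply_eq {n : ℕ} {W : H2 →L[ℂ] H2} (hW : IsWn n W) (hn : 0 < n) (f : H2) (i : ℕ) :
    W f i = f (i / n) := by
  rw [← hW f (i / n) (i % n) (Nat.mod_lt i hn), Nat.div_add_mod]

lemma IsWn.map_rangeIndicator {n : ℕ} {W : H2 →L[ℂ] H2} (hW : IsWn n W) (hn : 0 < n) (k : ℕ) :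
    W (rangeIndicator k) = rangeIndicator (n * k) := by
  ext i
  simp only [hW.apply_eq hn, rangeIndicator_apply, Nat.div_lt_iff_lt_mul hn, mul_comm n]

lemma eq_zero_of_map_mul_eq_mul_of_norm_le_sqrt {𝕜 : Type*} [NormedField 𝕜] {G : ℕ → 𝕜}
    {q : ℕ} {μ : 𝕜} {C : ℝ} (hG : ∀ n, ‖G n‖ ≤ C * √n) (hq : ∀ n, G (q * n) = μ * G n)
    (hμ : √q < ‖μ‖) (n : ℕ) : G n = 0 := by
  have hμ0 : 0 < ‖μ‖ := (Real.sqrt_nonneg _).trans_lt hμ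
  have hiter (k : ℕ) : G (q ^ k * n) = μ ^ k * G n := by
    induction k with
    | zero => simp
    | succ k ih => rw [pow_succ', mul_assoc, hq, ih, pow_succ', mul_assoc]
  have hsqrt (k : ℕ) : √((q : ℝ) ^ k) = √q ^ k := by
    rw [← Real.sqrt_sq (by positivity : 0 ≤ √q ^ k), ← pow_mul, mul_comm, pow_mul,
      Real.sq_sqrt (by positivity)]
  have hbound (k : ℕ) : ‖G n‖ ≤ (√q / ‖μ‖) ^ k * (C * √n) := by
    rw [div_pow, div_mul_eq_mul_div, le_div_iff₀ (pow_pos hμ0 k)]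
    calc ‖G n‖ * ‖μ‖ ^ k = ‖G (q ^ k * n)‖ := by rw [hiter, norm_mul, norm_pow, mul_comm]
      _ ≤ C * √(q ^ k * n : ℕ) := hG _
      _ = √q ^ k * (C * √n) := by
        push_cast
        rw [Real.sqrt_mul (by positivity), hsqrt]
        ring
  have hlim : Tendsto (fun k : ℕ => (√q / ‖μ‖) ^ k * (C * √n)) atTop (𝓝 0) := by
    simpa using (tendsto_pow_atTop_nhds_zero_of_lt_one (by positivity)
      ((div_lt_one hμ0).2 hμ)).mul_const (C * √n)
  exact norm_le_zero_iff.mp (ge_of_tendsto' hlim hbound)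

theorem poly_cyclic_general (m : ℕ) (lam : ℂ)
    (hlam : Real.sqrt (m + 1) < ‖lam + 1‖)
    (W : ℕ → (H2 →L[ℂ] H2)) (hW : ∀ n, 1 ≤ n → IsWn n (W n)) :
    (Submodule.span ℂ
        {x : H2 | ∃ n : ℕ, 1 ≤ n ∧
          x = W n ((∑ j ∈ Finset.Icc 1 m, lp.single 2 j (1 : ℂ))
                    - lam • lp.single 2 0 (1 : ℂ))}).topologicalClosure = ⊤ := by
  rw [Submodule.topologicalClosure_eq_top_iff, Submodule.eq_bot_iff]
  intro g hg
  rw [sum_single_Icc_sub_smul_single] at hg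
  have hscale (n : ℕ) : ⟪rangeIndicator ((m + 1) * n), g⟫_ℂ =
      conj (lam + 1) * ⟪rangeIndicator n, g⟫_ℂ := by
    rcases Nat.eq_zero_or_pos n with rfl | hn
    · simp [rangeIndicator]
    have horth := (Submodule.mem_orthogonal _ g).mp hg _ (Submodule.subset_span ⟨n, hn, rfl⟩)
    rwa [map_sub, map_smul, (hW n hn).map_rangeIndicator hn, (hW n hn).map_rangeIndicator hn,
      inner_sub_left, inner_smul_left, mul_one, mul_comm n, sub_eq_zero] at horth
  have hcauchySchwarz (n : ℕ) : ‖⟪rangeIndicator n, g⟫_ℂ‖ ≤ ‖g‖ * √n := by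
    simpa only [norm_rangeIndicator, mul_comm] using norm_inner_le_norm (𝕜 := ℂ) (rangeIndicator n) g
  refine eq_zero_of_inner_rangeIndicator_eq_zero
    (eq_zero_of_map_mul_eq_mul_of_norm_le_sqrt hcauchySchwarz hscale ?_)
  rwa [Complex.norm_conj, Nat.cast_add_one]

/-- For `m ≥ 1` and `|λ+1| > √(m+1)`, the polynomial `p(z) = z^m + ⋯ + z - λ` is a
cyclic vector for the semigroup `(W_n)`. -/
theorem poly_cyclic (m : ℕ) (hm : 1 ≤ m) (lam : ℂ)
    (hlam : Real.sqrt (m + 1) < ‖lam + 1‖)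
    (W : ℕ → (H2 →L[ℂ] H2)) (hW : ∀ n, 1 ≤ n → IsWn n (W n)) :
    (Submodule.span ℂ
        {x : H2 | ∃ n : ℕ, 1 ≤ n ∧
          x = W n ((∑ j ∈ Finset.Icc 1 m, lp.single 2 j (1 : ℂ))
                    - lam • lp.single 2 0 (1 : ℂ))}).topologicalClosure = ⊤ :=
  poly_cyclic_general m lam hlam W hW
end
end

section
/- For every n ≥ 2 and every λ ∈ ℂ with |λ| < √n, λ is an eigenvalue of W_n*. An explicit eigenvector f is given by f̂(0) = 1 and f̂(k) = (λ/n)^ℓ · (λ−1)/(n−1) for n^ℓ ≤ k ≤ n^{ℓ+1}−1, ℓ ≥ 0; this f lies in ℓ² and satisfies W_n* f = λ f. -/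
/-!
Since `W_n` sends `e_k` to the indicator of the block `[nk, nk + n)`, its adjoint acts by block
sums: `(W_n* f)(k) = ∑_{j<n} f(nk + j)`. The candidate `f` takes the value `(λ/n)^ℓ c` on the
whole level `[n^ℓ, n^{ℓ+1})`, and for `k ≥ 1` the block of `k` lies one level higher than `k`, so
its sum is `n · (λ/n) f(k) = λ f(k)`; at `k = 0` the block is `{0} ∪ [1, n)`, and
`c = (λ - 1)/(n - 1)` is exactly what makes `1 + (n - 1) c = λ`. Level `ℓ` has fewer than
`n^{ℓ+1}` indices, so `‖f‖²` is dominated by a geometric series of ratio `|λ|²/n < 1`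
(Schlömilch condensation along `n^ℓ`).
-/

open scoped InnerProductSpace
open Filter ContinuousLinearMap

noncomputable section

open Finset

theorem Nat.log_mul_add {n k j : ℕ} (hn : 1 < n) (hk : k ≠ 0) (hj : j < n) :
    Nat.log n (n * k + j) = Nat.log n k + 1 := by
  have hdiv : (n * k + j) / n = k := by
    rw [Nat.mul_add_div (by omega), Nat.div_eq_of_lt hj, add_zero]
  have hle : n ≤ n * k + j := Nat.le_add_right_of_le (Nat.le_mul_of_pos_right n (by omega))
  rw [Nat.log_of_one_lt_of_le hn hle, hdiv]

theorem summable_pow_log {n : ℕ} (hn : 1 < n) {r : ℝ} (hr : 0 ≤ r) (hnr : n * r < 1) :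
    Summable fun k : ℕ => r ^ Nat.log n k := by
  have hr1 : r ≤ 1 := by
    nlinarith [show (1 : ℝ) ≤ n by exact_mod_cast hn.le]
  refine (summable_schlomilch_iff_of_nonneg (u := (n ^ ·)) (C := n) (fun k => pow_nonneg hr _)
    (fun m k _ hmk => pow_le_pow_of_le_one hr hr1 (Nat.log_mono_right hmk))
    (fun k => by positivity) (pow_right_strictMono₀ hn) (by omega) fun k => ?_).mp ?_
  · simp only [smul_eq_mul, pow_succ, ← Nat.mul_sub_one]
    exact le_of_eq (by ring)
  · refine Summable.of_nonneg_of_le (fun ℓ => ?_) (fun ℓ => ?_)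
      ((summable_geometric_of_lt_one (by positivity) hnr).mul_left (n : ℝ))
    all_goals rw [Nat.log_pow hn]; push_cast
    · have hpow : (n : ℝ) ^ ℓ ≤ n ^ (ℓ + 1) :=
        pow_le_pow_right₀ (by exact_mod_cast hn.le) ℓ.le_succ
      exact mul_nonneg (sub_nonneg.2 hpow) (pow_nonneg hr _)
    · rw [mul_pow, ← mul_assoc, ← pow_succ']
      exact mul_le_mul_of_nonneg_right (sub_le_self _ (by positivity)) (pow_nonneg hr _)

def eigenCoeff (n : ℕ) (lam : ℂ) (k : ℕ) : ℂ :=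
  if k = 0 then 1 else (lam / n) ^ Nat.log n k * ((lam - 1) / (n - 1))

section eigenCoeff

variable {n : ℕ} {lam : ℂ}

theorem eigenCoeff_zero : eigenCoeff n lam 0 = 1 := if_pos rfl

theorem eigenCoeff_of_ne_zero {k : ℕ} (hk : k ≠ 0) :
    eigenCoeff n lam k = (lam / n) ^ Nat.log n k * ((lam - 1) / (n - 1)) := if_neg hk

theorem eigenCoeff_mul_add (hn : 1 < n) {k j : ℕ} (hk : k ≠ 0) (hj : j < n) :
    eigenCoeff n lam (n * k + j) = lam / n * eigenCoeff n lam k := by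
  rw [eigenCoeff_of_ne_zero hk, eigenCoeff_of_ne_zero (by positivity), Nat.log_mul_add hn hk hj,
    pow_succ', mul_assoc]

theorem sum_range_eigenCoeff_mul_add (hn : 1 < n) (k : ℕ) :
    ∑ j ∈ range n, eigenCoeff n lam (n * k + j) = lam * eigenCoeff n lam k := by
  have hn0 : (n : ℂ) ≠ 0 := by exact_mod_cast (by omega : n ≠ 0)
  rcases eq_or_ne k 0 with rfl | hk
  · obtain ⟨m, rfl⟩ : ∃ m, n = m + 1 := ⟨n - 1, by omega⟩
    have hm : (m : ℂ) ≠ 0 := by exact_mod_cast (by omega : m ≠ 0)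
    have hlt : ∀ j ∈ range m, eigenCoeff (m + 1) lam (j + 1) = (lam - 1) / m := fun j hj => by
      rw [eigenCoeff_of_ne_zero j.succ_ne_zero,
        Nat.log_of_lt (by simpa using mem_range.1 hj), pow_zero, one_mul]
      rw [Nat.cast_succ, add_sub_cancel_right]
    simp only [mul_zero, zero_add]
    rw [sum_range_succ', sum_congr rfl hlt, sum_const, card_range, nsmul_eq_mul, eigenCoeff_zero]
    field_simp
    ring
  · rw [sum_congr rfl fun j hj => eigenCoeff_mul_add hn hk (mem_range.1 hj), sum_const,
      card_range, nsmul_eq_mul]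
    field_simp

theorem memℓp_eigenCoeff (hn : 1 < n) (hlam : ‖lam‖ < Real.sqrt n) :
    Memℓp (eigenCoeff n lam) 2 := by
  have hn0 : (0 : ℝ) < n := by positivity
  have hr : n * (‖lam‖ / n) ^ 2 < 1 := by
    rw [show n * (‖lam‖ / n) ^ 2 = ‖lam‖ ^ 2 / n by field_simp, div_lt_one hn0]
    exact (Real.lt_sqrt (norm_nonneg lam)).1 hlam
  have hsum := (summable_pow_log hn (sq_nonneg _) hr).mul_left (‖(lam - 1) / (n - 1)‖ ^ 2)
  refine memℓp_gen (hsum.congr_cofinite ?_)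
  filter_upwards [eventually_cofinite_ne 0] with k hk
  rw [eigenCoeff_of_ne_zero hk, ENNReal.toReal_ofNat, Real.rpow_two, norm_mul, norm_pow,
    norm_div lam, Complex.norm_natCast]
  ring

end eigenCoeff

theorem lp.adjoint_apply_eq_inner_single {𝕜 ι : Type*} [RCLike 𝕜] [DecidableEq ι]
    (T : lp (fun _ : ι => 𝕜) 2 →L[𝕜] lp (fun _ : ι => 𝕜) 2) (f : lp (fun _ : ι => 𝕜) 2) (k : ι) :
    adjoint T f k = ⟪T (lp.single 2 k 1), f⟫_𝕜 := by
  rw [← adjoint_inner_right, lp.inner_single_left, RCLike.inner_apply, map_one, mul_one]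

theorem IsWn.apply_single_eq_zero {n : ℕ} {W : H2 →L[ℂ] H2} (hW : IsWn n W) (hn : 0 < n)
    {k i : ℕ} (hi : i ∉ Ico (n * k) (n * k + n)) : W (lp.single 2 k 1) i = 0 := by
  have hik : i / n ≠ k := by
    rintro rfl
    have hdiv := Nat.div_add_mod i n
    have hmod := Nat.mod_lt i hn
    simp only [mem_Ico] at hi
    omega
  rw [← Nat.div_add_mod i n, hW _ _ _ (Nat.mod_lt i hn), lp.single_apply_ne 2 k _ hik]

theorem IsWn.adjoint_apply_s12 {n : ℕ} {W : H2 →L[ℂ] H2} (hW : IsWn n W) (hn : 0 < n)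
    (f : H2) (k : ℕ) : adjoint W f k = ∑ j ∈ range n, f (n * k + j) := by
  have hsupp : ∀ i ∉ Ico (n * k) (n * k + n), ⟪W (lp.single 2 k 1) i, f i⟫_ℂ = 0 :=
    fun i hi => by rw [hW.apply_single_eq_zero hn hi, inner_zero_left]
  rw [lp.adjoint_apply_eq_inner_single,
    (lp.hasSum_inner _ f).unique (hasSum_sum_of_ne_finset_zero hsupp), sum_Ico_eq_sum_range,
    Nat.add_sub_cancel_left]
  refine sum_congr rfl fun j hj => ?_
  rw [hW _ _ _ (mem_range.1 hj), lp.single_apply_self, RCLike.inner_apply, map_one, mul_one]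

/-- For `n ≥ 2` and `|λ| < √n`, `λ` is an eigenvalue of `W_n*`, with explicit
eigenvector `f^(0) = 1`, `f^(k) = (λ/n)^ℓ (λ-1)/(n-1)` for `n^ℓ ≤ k ≤ n^{ℓ+1}-1`. -/
theorem eigenvalue_adjoint (n : ℕ) (hn : 2 ≤ n) (lam : ℂ)
    (hlam : ‖lam‖ < Real.sqrt n) (W : H2 →L[ℂ] H2) (hW : IsWn n W) :
    ∃ f : H2, f ≠ 0 ∧ f 0 = 1 ∧
      (∀ k : ℕ, 1 ≤ k →
        f k = (lam / (n : ℂ)) ^ (Nat.log n k) * ((lam - 1) / ((n : ℂ) - 1))) ∧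
      ContinuousLinearMap.adjoint W f = lam • f := by
  let f : H2 := ⟨eigenCoeff n lam, memℓp_eigenCoeff hn hlam⟩
  have hf0 : f 0 = 1 := show eigenCoeff n lam 0 = 1 from eigenCoeff_zero
  refine ⟨f, fun h => by simp [h] at hf0, hf0, fun k hk => eigenCoeff_of_ne_zero (by omega), ?_⟩
  ext k
  rw [hW.adjoint_apply_s12 (by omega), lp.coeFn_smul, Pi.smul_apply, smul_eq_mul]
  exact sum_range_eigenCoeff_mul_add hn k
end
end

section
/- Let M be the closed linear span in H² of {W_n h : n ≥ 2, h ∈ N}, where N = span{h_k : k ≥ 2}. Then M equals the closure of span{h_k − h_ℓ : k, ℓ ≥ 2}, and M is contained in {1−z}^⊥; in particular M is not dense in H². -/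
open scoped InnerProductSpace
open Filter ContinuousLinearMap

noncomputable section

/-- Let `N = span{h_k : k ≥ 2}` and `M` the closed span of `⋃_{n ≥ 2} W_n N`.
Then `M` equals the closure of `span{h_k - h_ℓ : k, ℓ ≥ 2}`, `M ⊆ {1-z}ᗮ`,
and in particular `M` is not dense in `H²`. -/
theorem M_not_dense (W : ℕ → (H2 →L[ℂ] H2)) (hW : ∀ n, 2 ≤ n → IsWn n (W n))
    (h : ℕ → H2) (hh : ∀ n k, 2 ≤ n → 2 ≤ k → W n (h k) = h (n * k) - h n) :
    ((Submodule.span ℂ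
        {x : H2 | ∃ n : ℕ, 2 ≤ n ∧
          ∃ g ∈ Submodule.span ℂ {y : H2 | ∃ k, 2 ≤ k ∧ y = h k},
            x = W n g}).topologicalClosure =
      (Submodule.span ℂ
        {x : H2 | ∃ k l : ℕ, 2 ≤ k ∧ 2 ≤ l ∧ x = h k - h l}).topologicalClosure) ∧
    (Submodule.span ℂ
        {x : H2 | ∃ n : ℕ, 2 ≤ n ∧
          ∃ g ∈ Submodule.span ℂ {y : H2 | ∃ k, 2 ≤ k ∧ y = h k},
            x = W n g}).topologicalClosure ≤
      (ℂ ∙ (lp.single 2 0 (1 : ℂ) - lp.single 2 1 (1 : ℂ)))ᗮ ∧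
    (Submodule.span ℂ
        {x : H2 | ∃ n : ℕ, 2 ≤ n ∧
          ∃ g ∈ Submodule.span ℂ {y : H2 | ∃ k, 2 ≤ k ∧ y = h k},
            x = W n g}).topologicalClosure ≠ ⊤ := by
  set v : H2 := lp.single 2 0 (1 : ℂ) - lp.single 2 1 (1 : ℂ) with hv
  set S1 : Set H2 := {x : H2 | ∃ n : ℕ, 2 ≤ n ∧
      ∃ g ∈ Submodule.span ℂ {y : H2 | ∃ k, 2 ≤ k ∧ y = h k}, x = W n g} with hS1
  set S2 : Set H2 := {x : H2 | ∃ k l : ℕ, 2 ≤ k ∧ 2 ≤ l ∧ x = h k - h l} with hS2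
  have hspan : Submodule.span ℂ S1 = Submodule.span ℂ S2 := by
    apply le_antisymm
    · rw [Submodule.span_le]
      rintro x ⟨n, hn, g, hg, rfl⟩
      refine Submodule.span_induction
        (p := fun g _ => (W n g : H2) ∈ Submodule.span ℂ S2) ?_ ?_ ?_ ?_ hg
      · rintro y ⟨k, hk, rfl⟩
        rw [hh n k hn hk]
        exact Submodule.subset_span ⟨n * k, n, le_trans hk (Nat.le_mul_of_pos_left k
          (by omega)), hn, rfl⟩
      · simp
      · intro a b _ _ ha hb
        rw [map_add]; exact Submodule.add_mem _ ha hb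
      · intro c a _ ha
        rw [map_smul]; exact Submodule.smul_mem _ c ha
    · rw [Submodule.span_le]
      rintro x ⟨k, l, hk, hl, rfl⟩
      have e1 : (W l (h k) : H2) ∈ Submodule.span ℂ S1 :=
        Submodule.subset_span ⟨l, hl, h k, Submodule.subset_span ⟨k, hk, rfl⟩, rfl⟩
      have e2 : (W k (h l) : H2) ∈ Submodule.span ℂ S1 :=
        Submodule.subset_span ⟨k, hk, h l, Submodule.subset_span ⟨l, hl, rfl⟩, rfl⟩
      have : h k - h l = W l (h k) - W k (h l) := by
        rw [hh l k hl hk, hh k l hk hl]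
        abel_nf
        rw [Nat.mul_comm l k]
        abel
      rw [this]
      exact Submodule.sub_mem _ e1 e2
  have hperp : Submodule.span ℂ S1 ≤ (ℂ ∙ v)ᗮ := by
    rw [Submodule.span_le]
    rintro x ⟨n, hn, g, _, rfl⟩
    rw [SetLike.mem_coe, Submodule.mem_orthogonal_singleton_iff_inner_right]
    have h0 : (W n g : H2) 0 = g 0 := by
      have := hW n hn g 0 0 (by omega); simpa using this
    have h1 : (W n g : H2) 1 = g 0 := by
      have := hW n hn g 0 1 (by omega); simpa using this
    rw [hv, inner_sub_left, lp.inner_single_left, lp.inner_single_left, h0, h1]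
    ring
  have hclperp : (Submodule.span ℂ S1).topologicalClosure ≤ (ℂ ∙ v)ᗮ :=
    Submodule.topologicalClosure_minimal _ hperp (Submodule.isClosed_orthogonal _)
  refine ⟨by rw [hspan], hclperp, ?_⟩
  intro htop
  have hvmem : v ∈ (ℂ ∙ v)ᗮ := hclperp (htop ▸ Submodule.mem_top)
  rw [Submodule.mem_orthogonal_singleton_iff_inner_right] at hvmem
  have hv0 : v ≠ 0 := by
    intro h0
    have : (v : ∀ _ : ℕ, ℂ) 0 = 0 := by rw [h0]; rfl
    rw [hv] at this
    simp [lp.single_apply] at this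
  exact hv0 (inner_self_eq_zero.mp hvmem)
end
end

section
/- The semigroups (T_n) and (W_n) on H² are semiconjugate via I − S: for every n ≥ 1, T_n (I − S) = (I − S) W_n, where S is the unilateral shift and T_n f(z) = f(z^n); moreover I − S is injective with dense range. -/
open scoped InnerProductSpace
open Filter ContinuousLinearMap

noncomputable section

/-- `S` is the unilateral shift `S f(z) = z f(z)` in coefficients. -/
def IsShift (S : H2 →L[ℂ] H2) : Prop :=
  ∀ f : H2, (S f) 0 = 0 ∧ ∀ m : ℕ, (S f) (m + 1) = f m

/-- `T` is the composition operator `T_n f(z) = f(z^n)` in coefficients. -/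
def IsTn (n : ℕ) (T : H2 →L[ℂ] H2) : Prop :=
  ∀ f : H2, (∀ k : ℕ, (T f) (n * k) = f k) ∧ ∀ m : ℕ, ¬ n ∣ m → (T f) m = 0

/-!
In Maclaurin coefficients, `(I - S) f` is the sequence of differences `f k - f (k - 1)`.
`W_n` repeats each coefficient of `f` on a block of `n` consecutive indices, so the differences of
`W_n f` vanish inside each block and at the block start `n k` equal the `k`-th difference of `f`:
this is exactly the coefficient pattern of `T_n ((I - S) f)`. A vector killed by `I - S`, or
orthogonal to its range (tested on the basis vectors `e_m - e_{m+1}`), is a constant `ℓ²` sequence,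
hence zero.
-/

open scoped ENNReal Topology

lemma Memℓp.tendsto_cofinite_zero {ι E : Type*} [NormedAddCommGroup E] {p : ℝ≥0∞} {f : ι → E}
    (hf : Memℓp f p) (hp : p ≠ ∞) : Tendsto f cofinite (𝓝 0) := by
  rcases eq_or_ne p 0 with rfl | hp0
  · refine tendsto_nhds_of_eventually_eq ?_
    simpa [Filter.eventually_cofinite] using memℓp_zero_iff.1 hf
  have hpos : 0 < p.toReal := ENNReal.toReal_pos hp0 hp
  have hsum := (hf.summable hpos).tendsto_cofinite_zero
  refine Metric.tendsto_nhds.2 fun ε hε => ?_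
  filter_upwards [hsum.eventually_lt_const (Real.rpow_pos_of_pos hε p.toReal)] with i hi
  rw [dist_zero_right]
  exact (Real.rpow_lt_rpow_iff (norm_nonneg _) hε.le hpos).1 hi

lemma lp.eq_zero_of_forall_succ_eq {E : Type*} [NormedAddCommGroup E] {p : ℝ≥0∞} (hp : p ≠ ∞)
    (g : lp (fun _ : ℕ => E) p) (hg : ∀ m, g (m + 1) = g m) : g = 0 := by
  have hconst : ∀ m, g m = g 0 := fun m => by
    induction m with
    | zero => rfl
    | succ m ih => rw [hg, ih]
  have hg0 : g 0 = 0 := by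
    have htendsto := (lp.memℓp g).tendsto_cofinite_zero hp
    rw [Nat.cofinite_eq_atTop, funext hconst] at htendsto
    exact tendsto_const_nhds_iff.1 htendsto
  ext m
  rw [hconst m, hg0, lp.coeFn_zero, Pi.zero_apply]

lemma ContinuousLinearMap.denseRange_of_forall_inner_eq_zero {𝕜 E F : Type*} [RCLike 𝕜]
    [NormedAddCommGroup E] [NormedSpace 𝕜 E] [NormedAddCommGroup F] [InnerProductSpace 𝕜 F]
    [CompleteSpace F] {A : E →L[𝕜] F} (h : ∀ g : F, (∀ f, ⟪A f, g⟫_𝕜 = 0) → g = 0) :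
    DenseRange A := by
  have horth : (LinearMap.range (A : E →ₗ[𝕜] F))ᗮ = ⊥ := (Submodule.eq_bot_iff _).2 fun g hg =>
    h g fun f => (Submodule.mem_orthogonal _ g).1 hg _ (LinearMap.mem_range_self _ f)
  have hdense := Submodule.dense_iff_topologicalClosure_eq_top.2
    (Submodule.topologicalClosure_eq_top_iff.2 horth)
  rwa [LinearMap.coe_range, coe_coe] at hdense

namespace IsShift

variable {S : H2 →L[ℂ] H2}

lemma one_sub_apply_zero (hS : IsShift S) (f : H2) : ((1 - S) f) 0 = f 0 := by
  simp [(hS f).1]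

lemma one_sub_apply_succ (hS : IsShift S) (f : H2) (m : ℕ) :
    ((1 - S) f) (m + 1) = f (m + 1) - f m := by
  simp [(hS f).2 m]

lemma apply_single (hS : IsShift S) (m : ℕ) (c : ℂ) :
    S (lp.single 2 m c) = lp.single 2 (m + 1) c := by
  ext k
  rcases k with _ | k
  · simp [(hS _).1]
  · simp [(hS _).2, Pi.single_apply]

lemma injective_one_sub (hS : IsShift S) : Function.Injective ⇑((1 : H2 →L[ℂ] H2) - S) := by
  refine (injective_iff_map_eq_zero _).2 fun f hf =>
    lp.eq_zero_of_forall_succ_eq ENNReal.ofNat_ne_top f fun m => ?_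
  have hdiff := hS.one_sub_apply_succ f m
  rw [hf] at hdiff
  exact sub_eq_zero.1 hdiff.symm

lemma denseRange_one_sub (hS : IsShift S) : DenseRange ⇑((1 : H2 →L[ℂ] H2) - S) := by
  refine denseRange_of_forall_inner_eq_zero fun g hg =>
    lp.eq_zero_of_forall_succ_eq ENNReal.ofNat_ne_top g fun m => ?_
  have hinner := hg (lp.single 2 m 1)
  rw [sub_apply, one_apply_eq_self, hS.apply_single, inner_sub_left, lp.inner_single_left,
    lp.inner_single_left] at hinner
  have hdiff : g m - g (m + 1) = 0 := by simpa using hinner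
  exact (sub_eq_zero.1 hdiff).symm

end IsShift

namespace IsWn

variable {n : ℕ} {S W : H2 →L[ℂ] H2}

lemma one_sub_apply_mul (hn : 0 < n) (hS : IsShift S) (hW : IsWn n W) (f : H2) (k : ℕ) :
    ((1 - S) (W f)) (n * k) = ((1 - S) f) k := by
  rcases k with _ | k
  · rw [mul_zero, hS.one_sub_apply_zero, hS.one_sub_apply_zero]
    simpa using hW f 0 0 hn
  · have hblock : n * (k + 1) = n * k + (n - 1) + 1 := by rw [mul_add_one]; omega
    rw [hS.one_sub_apply_succ, hblock, hS.one_sub_apply_succ, hW f k (n - 1) (by omega), ← hblock]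
    simpa using congrArg (· - f k) (hW f (k + 1) 0 hn)

lemma one_sub_apply_mul_add_eq_zero (hS : IsShift S) (hW : IsWn n W) (f : H2) (k : ℕ) {j : ℕ}
    (hj0 : 0 < j) (hjn : j < n) : ((1 - S) (W f)) (n * k + j) = 0 := by
  obtain ⟨i, rfl⟩ : ∃ i, j = i + 1 := ⟨j - 1, by omega⟩
  rw [← add_assoc, hS.one_sub_apply_succ, add_assoc, hW f k (i + 1) hjn,
    hW f k i (by omega), sub_self]

end IsWn

namespace IsTn

variable {n : ℕ} {T : H2 →L[ℂ] H2}

lemma apply_mul_add_eq_zero (hT : IsTn n T) (f : H2) (k : ℕ) {j : ℕ} (hj0 : 0 < j) (hjn : j < n) :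
    (T f) (n * k + j) = 0 :=
  (hT f).2 _ fun hdvd =>
    hj0.ne' (Nat.eq_zero_of_dvd_of_lt ((Nat.dvd_add_right (dvd_mul_right n k)).1 hdvd) hjn)

theorem comp_one_sub_eq {S W : H2 →L[ℂ] H2} (hn : 0 < n) (hS : IsShift S) (hT : IsTn n T)
    (hW : IsWn n W) : T ∘L (1 - S) = (1 - S) ∘L W := by
  ext f m
  obtain ⟨k, j, hjn, rfl⟩ : ∃ k j, j < n ∧ n * k + j = m :=
    ⟨m / n, m % n, Nat.mod_lt _ hn, Nat.div_add_mod m n⟩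
  rw [comp_apply, comp_apply]
  rcases Nat.eq_zero_or_pos j with rfl | hj0
  · rw [add_zero, (hT _).1, hW.one_sub_apply_mul hn hS]
  · rw [hT.apply_mul_add_eq_zero _ _ hj0 hjn, hW.one_sub_apply_mul_add_eq_zero hS _ _ hj0 hjn]

end IsTn

/-- `(T_n)` and `(W_n)` are semiconjugate via `I - S`: `T_n (I - S) = (I - S) W_n`,
and `I - S` is injective with dense range. -/
theorem semiconjugate (S : H2 →L[ℂ] H2) (hS : IsShift S)
    (T W : ℕ → (H2 →L[ℂ] H2))
    (hT : ∀ n, 1 ≤ n → IsTn n (T n)) (hW : ∀ n, 1 ≤ n → IsWn n (W n)) :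
    (∀ n, 1 ≤ n → (T n) ∘L (1 - S) = (1 - S) ∘L (W n)) ∧
      Function.Injective ⇑((1 : H2 →L[ℂ] H2) - S) ∧ DenseRange ⇑((1 : H2 →L[ℂ] H2) - S) :=
  ⟨fun n hn => (hT n hn).comp_one_sub_eq hn hS (hW n hn), hS.injective_one_sub,
    hS.denseRange_one_sub⟩
end
end
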